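/- The Gelfand–Zetlin operators satisfy the Serre relations of gl(N): (i) for 1 ≤ n ≤ N−2, E_{n,n+1}² E_{n+1,n+2} − 2 E_{n,n+1} E_{n+1,n+2} E_{n,n+1} + E_{n+1,n+2} E_{n,n+1}² = 0 and E_{n+1,n+2}² E_{n,n+1} − 2 E_{n+1,n+2} E_{n,n+1} E_{n+1,n+2} + E_{n,n+1} E_{n+1,n+2}² = 0; (ii) for 1 ≤ n ≤ N−2, E_{n+1,n}² E_{n+2,n+1} − 2 E_{n+1,n} E_{n+2,n+1} E_{n+1,n} + E_{n+2,n+1} E_{n+1,n}² = 0 and E_{n+2,n+1}² E_{n+1,n} − 2 E_{n+2,n+1} E_{n+1,n} E_{n+2,n+1} + E_{n+1,n} E_{n+2,n+1}² = 0; (iii) for |n−m| ≥ 2, [E_{n,n+1}, E_{m,m+1}] = 0 and [E_{n+1,n}, E_{m+1,m}] = 0. All identities hold applied to any function f at every point γ with γ_{kj} − γ_{ks} ∉ iℏ·ℤ for all k and all j ≠ s. -/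
import Mathlib


noncomputable section

open Finset

/-- A point of the Gelfand–Zetlin variable space: an assignment of a complex
number to each index pair `(n, j)` (with `γ (N, j)` playing the role of the
fixed top-level parameters). -/
abbrev Pt : Type := ℕ × ℕ → ℂ

/-- Operators acting on functions of the Gelfand–Zetlin variables. -/
abbrev Op : Type := (Pt → ℂ) → (Pt → ℂ)

/-- Shift the coordinate `γ (n, j)` by `c`. -/
def shift (n j : ℕ) (c : ℂ) (γ : Pt) : Pt :=
  fun p => if p = (n, j) then γ p + c else γ p

/-- The diagonal Gelfand–Zetlin operator `E_{nn}`. -/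
def Ediag (hb : ℂ) (n : ℕ) : Op := fun f γ =>
  (1 / (Complex.I * hb)) *
    ((∑ j ∈ Finset.Icc 1 n, γ (n, j)) - ∑ j ∈ Finset.Icc 1 (n - 1), γ (n - 1, j)) * f γ

/-- The raising Gelfand–Zetlin operator `E_{n,n+1}`. -/
def Eraise (hb : ℂ) (n : ℕ) : Op := fun f γ =>
  -(1 / (Complex.I * hb)) * ∑ j ∈ Finset.Icc 1 n,
    ((∏ r ∈ Finset.Icc 1 (n + 1), (γ (n, j) - γ (n + 1, r) - Complex.I * hb / 2)) /
        ∏ s ∈ (Finset.Icc 1 n).erase j, (γ (n, j) - γ (n, s))) *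
      f (shift n j (-(Complex.I * hb)) γ)

/-- The lowering Gelfand–Zetlin operator `E_{n+1,n}`. -/
def Elower (hb : ℂ) (n : ℕ) : Op := fun f γ =>
  (1 / (Complex.I * hb)) * ∑ j ∈ Finset.Icc 1 n,
    ((∏ r ∈ Finset.Icc 1 (n - 1), (γ (n, j) - γ (n - 1, r) + Complex.I * hb / 2)) /
        ∏ s ∈ (Finset.Icc 1 n).erase j, (γ (n, j) - γ (n, s))) *
      f (shift n j (Complex.I * hb) γ)

/-- Genericity: `γ (m, j) - γ (m, s) ∉ ihb·ℤ` for all levels `m ≤ N` and all `j ≠ s`. -/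
def Generic (N : ℕ) (hb : ℂ) (γ : Pt) : Prop :=
  ∀ m j s, 1 ≤ m → m ≤ N → 1 ≤ j → j ≤ m → 1 ≤ s → s ≤ m → j ≠ s →
    ∀ k : ℤ, γ (m, j) - γ (m, s) ≠ Complex.I * hb * (k : ℂ)

-- ######## auxiliary development ########

lemma shift_comm (n j m l : ℕ) (c d : ℂ) (γ : Pt) :
    shift n j c (shift m l d γ) = shift m l d (shift n j c γ) := by
  funext p
  simp only [shift]
  split_ifs <;> ring

def SOp (c : ℂ) (s : Finset ℕ) (w : ℕ → Pt → ℂ) (sh : ℕ → Pt → Pt) : Op :=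
  fun f γ => c * ∑ j ∈ s, w j γ * f (sh j γ)

/-- coefficient of `Eraise`. -/
def rc (hb : ℂ) (n j : ℕ) (γ : Pt) : ℂ :=
  (∏ r ∈ Finset.Icc 1 (n + 1), (γ (n, j) - γ (n + 1, r) - Complex.I * hb / 2)) /
    ∏ s ∈ (Finset.Icc 1 n).erase j, (γ (n, j) - γ (n, s))

/-- coefficient of `Elower`. -/
def lc (hb : ℂ) (n j : ℕ) (γ : Pt) : ℂ :=
  (∏ r ∈ Finset.Icc 1 (n - 1), (γ (n, j) - γ (n - 1, r) + Complex.I * hb / 2)) /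
    ∏ s ∈ (Finset.Icc 1 n).erase j, (γ (n, j) - γ (n, s))

lemma Eraise_eq (hb : ℂ) (n : ℕ) :
    Eraise hb n
      = SOp (-(1 / (Complex.I * hb))) (Finset.Icc 1 n) (rc hb n)
          (fun j => shift n j (-(Complex.I * hb))) := rfl

lemma Elower_eq (hb : ℂ) (n : ℕ) :
    Elower hb n
      = SOp (1 / (Complex.I * hb)) (Finset.Icc 1 n) (lc hb n)
          (fun j => shift n j (Complex.I * hb)) := rfl

lemma SOp_comp3 (c1 c2 c3 : ℂ) (s1 s2 s3 : Finset ℕ) (w1 w2 w3 : ℕ → Pt → ℂ)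
    (S1 S2 S3 : ℕ → Pt → Pt) (f : Pt → ℂ) (γ : Pt) :
    SOp c1 s1 w1 S1 (SOp c2 s2 w2 S2 (SOp c3 s3 w3 S3 f)) γ
      = c1 * c2 * c3 * ∑ j ∈ s1, ∑ k ∈ s2, ∑ l ∈ s3,
          w1 j γ * w2 k (S1 j γ) * w3 l (S2 k (S1 j γ)) * f (S3 l (S2 k (S1 j γ))) := by
  simp only [SOp, Finset.mul_sum]
  refine Finset.sum_congr rfl fun j hj => Finset.sum_congr rfl fun k hk =>
    Finset.sum_congr rfl fun l hl => by ring

lemma sum_antisym (s : Finset ℕ) (g : ℕ → ℕ → ℂ)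
    (h : ∀ j ∈ s, ∀ k ∈ s, g j k + g k j = 0) :
    ∑ j ∈ s, ∑ k ∈ s, g j k = 0 := by
  have h2 : (∑ j ∈ s, ∑ k ∈ s, g j k) + (∑ j ∈ s, ∑ k ∈ s, g j k) = 0 := by
    nth_rewrite 2 [Finset.sum_comm]
    rw [← Finset.sum_add_distrib]
    refine Finset.sum_eq_zero fun j hj => ?_
    rw [← Finset.sum_add_distrib]
    exact Finset.sum_eq_zero fun k hk => h j hj k hk
  exact add_self_eq_zero.mp h2

lemma serre_master (c d : ℂ) (s t : Finset ℕ) (w v : ℕ → Pt → ℂ) (S T : ℕ → Pt → Pt)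
    (f : Pt → ℂ) (γ : Pt)
    (hSS : ∀ a b δ, S a (S b δ) = S b (S a δ))
    (hST : ∀ a b δ, S a (T b δ) = T b (S a δ))
    (hkey : ∀ j ∈ s, ∀ k ∈ s, ∀ l ∈ t,
      (w j γ * w k (S j γ) * v l (S k (S j γ))
        - 2 * (w j γ * v l (S j γ) * w k (S j (T l γ)))
        + v l γ * w j (T l γ) * w k (S j (T l γ)))
      + (w k γ * w j (S k γ) * v l (S j (S k γ))
        - 2 * (w k γ * v l (S k γ) * w j (S k (T l γ)))
        + v l γ * w k (T l γ) * w j (S k (T l γ))) = 0) :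
    SOp c s w S (SOp c s w S (SOp d t v T f)) γ
      - 2 * SOp c s w S (SOp d t v T (SOp c s w S f)) γ
      + SOp d t v T (SOp c s w S (SOp c s w S f)) γ = 0 := by
  have h1 : SOp c s w S (SOp c s w S (SOp d t v T f)) γ
      = c * c * d * ∑ j ∈ s, ∑ k ∈ s, ∑ l ∈ t,
          w j γ * w k (S j γ) * v l (S k (S j γ)) * f (S k (S j (T l γ))) := by
    rw [SOp_comp3]
    refine congrArg _ ?_
    refine Finset.sum_congr rfl fun j hj => Finset.sum_congr rfl fun k hk =>
      Finset.sum_congr rfl fun l hl => ?_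
    rw [← hST k l (S j γ), ← hST j l γ]
  have h2 : SOp c s w S (SOp d t v T (SOp c s w S f)) γ
      = c * c * d * ∑ j ∈ s, ∑ k ∈ s, ∑ l ∈ t,
          w j γ * v l (S j γ) * w k (S j (T l γ)) * f (S k (S j (T l γ))) := by
    rw [SOp_comp3]
    rw [show c * d * c = c * c * d by ring]
    refine congrArg _ ?_
    refine Finset.sum_congr rfl fun j hj => ?_
    rw [Finset.sum_comm]
    refine Finset.sum_congr rfl fun k hk => Finset.sum_congr rfl fun l hl => ?_
    rw [← hST j l γ]
  have h3 : SOp d t v T (SOp c s w S (SOp c s w S f)) γ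
      = c * c * d * ∑ j ∈ s, ∑ k ∈ s, ∑ l ∈ t,
          v l γ * w j (T l γ) * w k (S j (T l γ)) * f (S k (S j (T l γ))) := by
    rw [SOp_comp3]
    rw [show d * c * c = c * c * d by ring]
    refine congrArg _ ?_
    rw [Finset.sum_comm]
    refine Finset.sum_congr rfl fun j hj => ?_
    rw [Finset.sum_comm]
  rw [h1, h2, h3]
  have main : ∑ j ∈ s, ∑ k ∈ s, ∑ l ∈ t,
      (w j γ * w k (S j γ) * v l (S k (S j γ)) * f (S k (S j (T l γ)))
        - 2 * (w j γ * v l (S j γ) * w k (S j (T l γ)) * f (S k (S j (T l γ))))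
        + v l γ * w j (T l γ) * w k (S j (T l γ)) * f (S k (S j (T l γ)))) = 0 := by
    apply sum_antisym
    intro j hj k hk
    rw [← Finset.sum_add_distrib]
    refine Finset.sum_eq_zero fun l hl => ?_
    rw [hSS j k (T l γ)]
    have hk2 := hkey j hj k hk l hl
    linear_combination f (S k (S j (T l γ))) * hk2
  have expand : ∑ j ∈ s, ∑ k ∈ s, ∑ l ∈ t,
      (w j γ * w k (S j γ) * v l (S k (S j γ)) * f (S k (S j (T l γ)))
        - 2 * (w j γ * v l (S j γ) * w k (S j (T l γ)) * f (S k (S j (T l γ))))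
        + v l γ * w j (T l γ) * w k (S j (T l γ)) * f (S k (S j (T l γ))))
      = (∑ j ∈ s, ∑ k ∈ s, ∑ l ∈ t,
          w j γ * w k (S j γ) * v l (S k (S j γ)) * f (S k (S j (T l γ))))
        - 2 * (∑ j ∈ s, ∑ k ∈ s, ∑ l ∈ t,
          w j γ * v l (S j γ) * w k (S j (T l γ)) * f (S k (S j (T l γ))))
        + ∑ j ∈ s, ∑ k ∈ s, ∑ l ∈ t,
          v l γ * w j (T l γ) * w k (S j (T l γ)) * f (S k (S j (T l γ))) := by
    simp only [Finset.sum_add_distrib, Finset.sum_sub_distrib, Finset.mul_sum]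
  rw [expand] at main
  linear_combination (c * c * d) * main

lemma comm_master (c d : ℂ) (s t : Finset ℕ) (w v : ℕ → Pt → ℂ) (S T : ℕ → Pt → Pt)
    (f : Pt → ℂ) (γ : Pt)
    (hST : ∀ a b δ, S a (T b δ) = T b (S a δ))
    (hw : ∀ j ∈ s, ∀ l ∈ t, w j (T l γ) = w j γ)
    (hv : ∀ l ∈ t, ∀ j ∈ s, v l (S j γ) = v l γ) :
    SOp c s w S (SOp d t v T f) γ = SOp d t v T (SOp c s w S f) γ := by
  simp only [SOp, Finset.mul_sum]
  rw [Finset.sum_comm]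
  refine Finset.sum_congr rfl fun l hl => Finset.sum_congr rfl fun j hj => ?_
  rw [hv l hl j hj, hw j hj l hl, hST j l γ]
  ring

lemma shift_zero (n j : ℕ) (γ : Pt) : shift n j (0:ℂ) γ = γ := by
  funext p; simp [shift]

lemma rc_invariant (hb : ℂ) (n j m l : ℕ) (c : ℂ) (γ : Pt) (h1 : m ≠ n) (h2 : m ≠ n + 1) :
    rc hb n j (shift m l c γ) = rc hb n j γ := by
  unfold rc
  congr 1
  · exact Finset.prod_congr rfl fun r hr => by simp [shift, h1.symm, h2.symm]
  · exact Finset.prod_congr rfl fun s hs => by simp [shift, h1.symm]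

lemma lc_invariant (hb : ℂ) (n j m l : ℕ) (c : ℂ) (γ : Pt) (h1 : m ≠ n) (h2 : m ≠ n - 1) :
    lc hb n j (shift m l c γ) = lc hb n j γ := by
  unfold lc
  congr 1
  · exact Finset.prod_congr rfl fun r hr => by simp [shift, h1.symm, h2.symm]
  · exact Finset.prod_congr rfl fun s hs => by simp [shift, h1.symm]

lemma gne (N : ℕ) (hb : ℂ) (γ : Pt) (hγ : Generic N hb γ) {m j s : ℕ} (hm : 1 ≤ m)
    (hmN : m ≤ N) (hj : j ∈ Finset.Icc 1 m) (hs : s ∈ Finset.Icc 1 m) (hjs : j ≠ s) (k : ℤ) :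
    γ (m, j) - γ (m, s) ≠ Complex.I * hb * (k : ℂ) := by
  obtain ⟨h1, h2⟩ := Finset.mem_Icc.mp hj
  obtain ⟨h3, h4⟩ := Finset.mem_Icc.mp hs
  exact hγ m j s hm hmN h1 h2 h3 h4 hjs k

lemma gne0 (N : ℕ) (hb : ℂ) (γ : Pt) (hγ : Generic N hb γ) {m j s : ℕ} (hm : 1 ≤ m)
    (hmN : m ≤ N) (hj : j ∈ Finset.Icc 1 m) (hs : s ∈ Finset.Icc 1 m) (hjs : j ≠ s) :
    γ (m, j) - γ (m, s) ≠ 0 := by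
  have := gne N hb γ hγ hm hmN hj hs hjs 0
  simpa using this

/-- `genA`: raising coefficient at level `n`, off-diagonal, with a level-`n` shift at `b ≠ a`
and a level-`n+1` shift at `l`. -/
lemma genA (hb : ℂ) (n a b l : ℕ) (c1 c2 : ℂ) (γ : Pt)
    (hab : a ≠ b) (hbI : b ∈ Finset.Icc 1 n) (hl : l ∈ Finset.Icc 1 (n+1)) :
    rc hb n a (shift n b c2 (shift (n+1) l c1 γ))
      = ((γ (n,a) - (γ (n+1,l) + c1) - Complex.I*hb/2)
          * ∏ r ∈ (Finset.Icc 1 (n+1)).erase l, (γ (n,a) - γ (n+1,r) - Complex.I*hb/2))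
        / ((γ (n,a) - (γ (n,b) + c2))
          * ∏ s ∈ ((Finset.Icc 1 n).erase a).erase b, (γ (n,a) - γ (n,s))) := by
  unfold rc
  congr 1
  · rw [← Finset.mul_prod_erase _ _ hl]
    congr 1
    · simp [shift, hab]
    · refine Finset.prod_congr rfl fun r hr => ?_
      have hrl : r ≠ l := (Finset.mem_erase.mp hr).1
      simp [shift, hab, hrl]
  · have hbmem : b ∈ (Finset.Icc 1 n).erase a := Finset.mem_erase.mpr ⟨Ne.symm hab, hbI⟩
    rw [← Finset.mul_prod_erase _ _ hbmem]
    congr 1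
    · simp [shift, hab]
    · refine Finset.prod_congr rfl fun s hs => ?_
      have hsb : s ≠ b := (Finset.mem_erase.mp hs).1
      have hsa : s ≠ a := (Finset.mem_erase.mp (Finset.mem_of_mem_erase hs)).1
      simp [shift, hab, hsb, hsa]

/-- `genB`: raising coefficient at level `n`, diagonal version. -/
lemma genB (hb : ℂ) (n a l : ℕ) (c1 c2 : ℂ) (γ : Pt) (hl : l ∈ Finset.Icc 1 (n+1)) :
    rc hb n a (shift n a c2 (shift (n+1) l c1 γ))
      = (((γ (n,a) + c2) - (γ (n+1,l) + c1) - Complex.I*hb/2)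
          * ∏ r ∈ (Finset.Icc 1 (n+1)).erase l, ((γ (n,a) + c2) - γ (n+1,r) - Complex.I*hb/2))
        / ∏ s ∈ (Finset.Icc 1 n).erase a, ((γ (n,a) + c2) - γ (n,s)) := by
  unfold rc
  congr 1
  · rw [← Finset.mul_prod_erase _ _ hl]
    congr 1
    · simp [shift]
    · refine Finset.prod_congr rfl fun r hr => ?_
      have hrl : r ≠ l := (Finset.mem_erase.mp hr).1
      simp [shift, hrl]
  · refine Finset.prod_congr rfl fun s hs => ?_
    have hsa : s ≠ a := (Finset.mem_erase.mp hs).1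
    simp [shift, hsa]

/-- `genC`: raising coefficient at level `n`, two level-`n+1` shifts at `u ≠ v`. -/
lemma genC (hb : ℂ) (n a u v : ℕ) (c1 c2 : ℂ) (γ : Pt)
    (huv : u ≠ v) (hu : u ∈ Finset.Icc 1 (n+1)) (hv : v ∈ Finset.Icc 1 (n+1)) :
    rc hb n a (shift (n+1) u c1 (shift (n+1) v c2 γ))
      = ((γ (n,a) - (γ (n+1,u) + c1) - Complex.I*hb/2)
          * ((γ (n,a) - (γ (n+1,v) + c2) - Complex.I*hb/2)
          * ∏ r ∈ ((Finset.Icc 1 (n+1)).erase u).erase v, (γ (n,a) - γ (n+1,r) - Complex.I*hb/2)))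
        / ∏ s ∈ (Finset.Icc 1 n).erase a, (γ (n,a) - γ (n,s)) := by
  unfold rc
  congr 1
  · have hvmem : v ∈ (Finset.Icc 1 (n+1)).erase u := Finset.mem_erase.mpr ⟨Ne.symm huv, hv⟩
    rw [← Finset.mul_prod_erase _ _ hu, ← Finset.mul_prod_erase _ _ hvmem]
    congr 1
    · simp [shift, huv]
    congr 1
    · simp [shift, huv.symm]
    · refine Finset.prod_congr rfl fun r hr => ?_
      have hrv : r ≠ v := (Finset.mem_erase.mp hr).1
      have hru : r ≠ u := (Finset.mem_erase.mp (Finset.mem_of_mem_erase hr)).1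
      simp [shift, hru, hrv]
  · refine Finset.prod_congr rfl fun s hs => ?_
    simp [shift]

/-- `genD`: raising coefficient at level `n`, two level-`n+1` shifts at the same index. -/
lemma genD (hb : ℂ) (n a u : ℕ) (c1 c2 : ℂ) (γ : Pt) (hu : u ∈ Finset.Icc 1 (n+1)) :
    rc hb n a (shift (n+1) u c1 (shift (n+1) u c2 γ))
      = ((γ (n,a) - (γ (n+1,u) + c2 + c1) - Complex.I*hb/2)
          * ∏ r ∈ (Finset.Icc 1 (n+1)).erase u, (γ (n,a) - γ (n+1,r) - Complex.I*hb/2))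
        / ∏ s ∈ (Finset.Icc 1 n).erase a, (γ (n,a) - γ (n,s)) := by
  unfold rc
  congr 1
  · rw [← Finset.mul_prod_erase _ _ hu]
    congr 1
    · simp [shift]
    · refine Finset.prod_congr rfl fun r hr => ?_
      have hru : r ≠ u := (Finset.mem_erase.mp hr).1
      simp [shift, hru]
  · refine Finset.prod_congr rfl fun s hs => ?_
    simp [shift]

/-- `genE`: raising coefficient at level `m` under a single level-`m` shift at `b ≠ a`. -/
lemma genE (hb : ℂ) (m a b : ℕ) (c : ℂ) (γ : Pt) (hab : a ≠ b) (hbI : b ∈ Finset.Icc 1 m) :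
    rc hb m a (shift m b c γ)
      = (∏ r ∈ Finset.Icc 1 (m+1), (γ (m,a) - γ (m+1,r) - Complex.I*hb/2))
        / ((γ (m,a) - (γ (m,b) + c))
          * ∏ s ∈ ((Finset.Icc 1 m).erase a).erase b, (γ (m,a) - γ (m,s))) := by
  unfold rc
  congr 1
  · refine Finset.prod_congr rfl fun r hr => ?_
    simp [shift, hab]
  · have hbmem : b ∈ (Finset.Icc 1 m).erase a := Finset.mem_erase.mpr ⟨Ne.symm hab, hbI⟩
    rw [← Finset.mul_prod_erase _ _ hbmem]
    congr 1
    · simp [shift, hab]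
    · refine Finset.prod_congr rfl fun s hs => ?_
      have hsb : s ≠ b := (Finset.mem_erase.mp hs).1
      have hsa : s ≠ a := (Finset.mem_erase.mp (Finset.mem_of_mem_erase hs)).1
      simp [shift, hsa, hsb, hab]

/-- `genF`: raising coefficient at level `m` under a level-`m` shift at `a` itself. -/
lemma genF (hb : ℂ) (m a : ℕ) (c : ℂ) (γ : Pt) :
    rc hb m a (shift m a c γ)
      = (∏ r ∈ Finset.Icc 1 (m+1), ((γ (m,a) + c) - γ (m+1,r) - Complex.I*hb/2))
        / ∏ s ∈ (Finset.Icc 1 m).erase a, ((γ (m,a) + c) - γ (m,s)) := by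
  unfold rc
  congr 1
  · exact Finset.prod_congr rfl fun r hr => by simp [shift]
  · refine Finset.prod_congr rfl fun s hs => ?_
    have hsa : s ≠ a := (Finset.mem_erase.mp hs).1
    simp [shift, hsa]

/-- `genA'`: lowering coefficient at level `n+1`, off-diagonal, with a level-`n+1` shift
at `b ≠ a` and a level-`n` shift at `l`. -/
lemma genA' (hb : ℂ) (n a b l : ℕ) (c1 c2 : ℂ) (γ : Pt)
    (hab : a ≠ b) (hbI : b ∈ Finset.Icc 1 (n+1)) (hl : l ∈ Finset.Icc 1 n) :
    lc hb (n+1) a (shift (n+1) b c2 (shift n l c1 γ))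
      = ((γ (n+1,a) - (γ (n,l) + c1) + Complex.I*hb/2)
          * ∏ r ∈ (Finset.Icc 1 n).erase l, (γ (n+1,a) - γ (n,r) + Complex.I*hb/2))
        / ((γ (n+1,a) - (γ (n+1,b) + c2))
          * ∏ s ∈ ((Finset.Icc 1 (n+1)).erase a).erase b, (γ (n+1,a) - γ (n+1,s))) := by
  unfold lc
  simp only [Nat.add_sub_cancel]
  congr 1
  · rw [← Finset.mul_prod_erase _ _ hl]
    congr 1
    · simp [shift, hab]
    · refine Finset.prod_congr rfl fun r hr => ?_
      have hrl : r ≠ l := (Finset.mem_erase.mp hr).1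
      simp [shift, hab, hrl]
  · have hbmem : b ∈ (Finset.Icc 1 (n+1)).erase a := Finset.mem_erase.mpr ⟨Ne.symm hab, hbI⟩
    rw [← Finset.mul_prod_erase _ _ hbmem]
    congr 1
    · simp [shift, hab]
    · refine Finset.prod_congr rfl fun s hs => ?_
      have hsb : s ≠ b := (Finset.mem_erase.mp hs).1
      have hsa : s ≠ a := (Finset.mem_erase.mp (Finset.mem_of_mem_erase hs)).1
      simp [shift, hsa, hsb, hab]

/-- `genB'`: lowering coefficient at level `n+1`, diagonal version. -/
lemma genB' (hb : ℂ) (n a l : ℕ) (c1 c2 : ℂ) (γ : Pt) (hl : l ∈ Finset.Icc 1 n) :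
    lc hb (n+1) a (shift (n+1) a c2 (shift n l c1 γ))
      = (((γ (n+1,a) + c2) - (γ (n,l) + c1) + Complex.I*hb/2)
          * ∏ r ∈ (Finset.Icc 1 n).erase l, ((γ (n+1,a) + c2) - γ (n,r) + Complex.I*hb/2))
        / ∏ s ∈ (Finset.Icc 1 (n+1)).erase a, ((γ (n+1,a) + c2) - γ (n+1,s)) := by
  unfold lc
  simp only [Nat.add_sub_cancel]
  congr 1
  · rw [← Finset.mul_prod_erase _ _ hl]
    congr 1
    · simp [shift]
    · refine Finset.prod_congr rfl fun r hr => ?_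
      have hrl : r ≠ l := (Finset.mem_erase.mp hr).1
      simp [shift, hrl]
  · refine Finset.prod_congr rfl fun s hs => ?_
    have hsa : s ≠ a := (Finset.mem_erase.mp hs).1
    simp [shift, hsa]

/-- `genC'`: lowering coefficient at level `n+1`, two level-`n` shifts at `u ≠ v`. -/
lemma genC' (hb : ℂ) (n a u v : ℕ) (c1 c2 : ℂ) (γ : Pt)
    (huv : u ≠ v) (hu : u ∈ Finset.Icc 1 n) (hv : v ∈ Finset.Icc 1 n) :
    lc hb (n+1) a (shift n u c1 (shift n v c2 γ))
      = ((γ (n+1,a) - (γ (n,u) + c1) + Complex.I*hb/2)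
          * ((γ (n+1,a) - (γ (n,v) + c2) + Complex.I*hb/2)
          * ∏ r ∈ ((Finset.Icc 1 n).erase u).erase v, (γ (n+1,a) - γ (n,r) + Complex.I*hb/2)))
        / ∏ s ∈ (Finset.Icc 1 (n+1)).erase a, (γ (n+1,a) - γ (n+1,s)) := by
  unfold lc
  simp only [Nat.add_sub_cancel]
  congr 1
  · have hvmem : v ∈ (Finset.Icc 1 n).erase u := Finset.mem_erase.mpr ⟨Ne.symm huv, hv⟩
    rw [← Finset.mul_prod_erase _ _ hu, ← Finset.mul_prod_erase _ _ hvmem]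
    congr 1
    · simp [shift, huv]
    congr 1
    · simp [shift, huv.symm]
    · refine Finset.prod_congr rfl fun r hr => ?_
      have hrv : r ≠ v := (Finset.mem_erase.mp hr).1
      have hru : r ≠ u := (Finset.mem_erase.mp (Finset.mem_of_mem_erase hr)).1
      simp [shift, hru, hrv]
  · refine Finset.prod_congr rfl fun s hs => ?_
    simp [shift]

/-- `genD'`: lowering coefficient at level `n+1`, two level-`n` shifts at the same index. -/
lemma genD' (hb : ℂ) (n a u : ℕ) (c1 c2 : ℂ) (γ : Pt) (hu : u ∈ Finset.Icc 1 n) :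
    lc hb (n+1) a (shift n u c1 (shift n u c2 γ))
      = ((γ (n+1,a) - (γ (n,u) + c2 + c1) + Complex.I*hb/2)
          * ∏ r ∈ (Finset.Icc 1 n).erase u, (γ (n+1,a) - γ (n,r) + Complex.I*hb/2))
        / ∏ s ∈ (Finset.Icc 1 (n+1)).erase a, (γ (n+1,a) - γ (n+1,s)) := by
  unfold lc
  simp only [Nat.add_sub_cancel]
  congr 1
  · rw [← Finset.mul_prod_erase _ _ hu]
    congr 1
    · simp [shift]
    · refine Finset.prod_congr rfl fun r hr => ?_
      have hru : r ≠ u := (Finset.mem_erase.mp hr).1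
      simp [shift, hru]
  · refine Finset.prod_congr rfl fun s hs => ?_
    simp [shift]

/-- `genG`: lowering coefficient at level `n ≥ 1` under a single level-`n` shift at `b ≠ a`. -/
lemma genG (hb : ℂ) (n a b : ℕ) (c : ℂ) (γ : Pt) (hn : 1 ≤ n)
    (hab : a ≠ b) (hbI : b ∈ Finset.Icc 1 n) :
    lc hb n a (shift n b c γ)
      = (∏ r ∈ Finset.Icc 1 (n-1), (γ (n,a) - γ (n-1,r) + Complex.I*hb/2))
        / ((γ (n,a) - (γ (n,b) + c))
          * ∏ s ∈ ((Finset.Icc 1 n).erase a).erase b, (γ (n,a) - γ (n,s))) := by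
  have hn1 : n - 1 ≠ n := by omega
  unfold lc
  congr 1
  · refine Finset.prod_congr rfl fun r hr => ?_
    simp [shift, hab, hn1]
  · have hbmem : b ∈ (Finset.Icc 1 n).erase a := Finset.mem_erase.mpr ⟨Ne.symm hab, hbI⟩
    rw [← Finset.mul_prod_erase _ _ hbmem]
    congr 1
    · simp [shift, hab]
    · refine Finset.prod_congr rfl fun s hs => ?_
      have hsb : s ≠ b := (Finset.mem_erase.mp hs).1
      have hsa : s ≠ a := (Finset.mem_erase.mp (Finset.mem_of_mem_erase hs)).1
      simp [shift, hsa, hsb, hab]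

/-- `genH`: lowering coefficient at level `n ≥ 1` under a level-`n` shift at `a` itself. -/
lemma genH (hb : ℂ) (n a : ℕ) (c : ℂ) (γ : Pt) (hn : 1 ≤ n) :
    lc hb n a (shift n a c γ)
      = (∏ r ∈ Finset.Icc 1 (n-1), ((γ (n,a) + c) - γ (n-1,r) + Complex.I*hb/2))
        / ∏ s ∈ (Finset.Icc 1 n).erase a, ((γ (n,a) + c) - γ (n,s)) := by
  have hn1 : n - 1 ≠ n := by omega
  unfold lc
  congr 1
  · exact Finset.prod_congr rfl fun r hr => by simp [shift, hn1]
  · refine Finset.prod_congr rfl fun s hs => ?_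
    have hsa : s ≠ a := (Finset.mem_erase.mp hs).1
    simp [shift, hsa]

set_option maxHeartbeats 1600000 in
lemma hkey1 (N n : ℕ) (hb : ℂ) (hhb : hb ≠ 0) (γ : Pt) (hγ : Generic N hb γ)
    (hn1 : 1 ≤ n) (hn2 : n + 2 ≤ N) :
    ∀ j ∈ Finset.Icc 1 n, ∀ k ∈ Finset.Icc 1 n, ∀ l ∈ Finset.Icc 1 (n+1),
      (rc hb n j γ * rc hb n k (shift n j (-(Complex.I*hb)) γ)
          * rc hb (n+1) l (shift n k (-(Complex.I*hb)) (shift n j (-(Complex.I*hb)) γ))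
        - 2 * (rc hb n j γ * rc hb (n+1) l (shift n j (-(Complex.I*hb)) γ)
          * rc hb n k (shift n j (-(Complex.I*hb)) (shift (n+1) l (-(Complex.I*hb)) γ)))
        + rc hb (n+1) l γ * rc hb n j (shift (n+1) l (-(Complex.I*hb)) γ)
          * rc hb n k (shift n j (-(Complex.I*hb)) (shift (n+1) l (-(Complex.I*hb)) γ)))
      + (rc hb n k γ * rc hb n j (shift n k (-(Complex.I*hb)) γ)
          * rc hb (n+1) l (shift n j (-(Complex.I*hb)) (shift n k (-(Complex.I*hb)) γ))
        - 2 * (rc hb n k γ * rc hb (n+1) l (shift n k (-(Complex.I*hb)) γ)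
          * rc hb n j (shift n k (-(Complex.I*hb)) (shift (n+1) l (-(Complex.I*hb)) γ)))
        + rc hb (n+1) l γ * rc hb n k (shift (n+1) l (-(Complex.I*hb)) γ)
          * rc hb n j (shift n k (-(Complex.I*hb)) (shift (n+1) l (-(Complex.I*hb)) γ))) = 0 := by
  intro j hj k hk l hl
  have hnN : n ≤ N := by omega
  have hinv1 : rc hb (n+1) l (shift n k (-(Complex.I*hb)) (shift n j (-(Complex.I*hb)) γ))
      = rc hb (n+1) l γ := by
    rw [rc_invariant hb (n+1) l n k _ _ (by omega) (by omega),
      rc_invariant hb (n+1) l n j _ _ (by omega) (by omega)]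
  have hinv2 : rc hb (n+1) l (shift n j (-(Complex.I*hb)) γ) = rc hb (n+1) l γ :=
    rc_invariant hb (n+1) l n j _ _ (by omega) (by omega)
  have hinv3 : rc hb (n+1) l (shift n j (-(Complex.I*hb)) (shift n k (-(Complex.I*hb)) γ))
      = rc hb (n+1) l γ := by
    rw [rc_invariant hb (n+1) l n j _ _ (by omega) (by omega),
      rc_invariant hb (n+1) l n k _ _ (by omega) (by omega)]
  have hinv4 : rc hb (n+1) l (shift n k (-(Complex.I*hb)) γ) = rc hb (n+1) l γ :=
    rc_invariant hb (n+1) l n k _ _ (by omega) (by omega)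
  by_cases hjk : j = k
  · -- diagonal case
    subst hjk
    have hDJf : (∏ s ∈ (Finset.Icc 1 n).erase j, (γ (n,j) - γ (n,s))) ≠ 0 := by
      rw [Finset.prod_ne_zero_iff]
      intro s hs
      exact gne0 N hb γ hγ hn1 hnN hj (Finset.mem_of_mem_erase hs)
        (Ne.symm (Finset.ne_of_mem_erase hs))
    have hDJf' : (∏ s ∈ (Finset.Icc 1 n).erase j,
        ((γ (n,j) + -(Complex.I*hb)) - γ (n,s))) ≠ 0 := by
      rw [Finset.prod_ne_zero_iff]
      intro s hs
      intro H
      exact gne N hb γ hγ hn1 hnN hj (Finset.mem_of_mem_erase hs)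
        (Ne.symm (Finset.ne_of_mem_erase hs)) 1 (by push_cast; linear_combination H)
    have o1 := genB hb n j l 0 0 γ hl
    have o2 := genB hb n j l 0 (-(Complex.I*hb)) γ hl
    have o3 := genB hb n j l (-(Complex.I*hb)) (-(Complex.I*hb)) γ hl
    have o4 := genB hb n j l (-(Complex.I*hb)) 0 γ hl
    simp only [shift_zero, add_zero] at o1 o2 o3 o4
    rw [hinv1, hinv2, o1, o2, o3, o4]
    set x := γ (n,j) with hx
    set g := γ (n+1,l) with hg
    set V := rc hb (n+1) l γ with hV
    set PJ := ∏ r ∈ (Finset.Icc 1 (n+1)).erase l, (x - γ (n+1,r) - Complex.I*hb/2) with hPJ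
    set PJ' := ∏ r ∈ (Finset.Icc 1 (n+1)).erase l,
      (x + -(Complex.I*hb) - γ (n+1,r) - Complex.I*hb/2) with hPJ'
    set DJ := ∏ s ∈ (Finset.Icc 1 n).erase j, (x - γ (n,s)) with hDJ
    set DJ' := ∏ s ∈ (Finset.Icc 1 n).erase j, (x + -(Complex.I*hb) - γ (n,s)) with hDJ'
    clear_value x g V PJ PJ' DJ DJ'
    clear o1 o2 o3 o4 hinv1 hinv2 hinv3 hinv4 hx hg hV hPJ hPJ' hDJ hDJ' hγ
    field_simp
    ring
  · -- off-diagonal case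
    have hkj : k ≠ j := Ne.symm hjk
    have hne1 : γ (n,j) - γ (n,k) ≠ 0 := gne0 N hb γ hγ hn1 hnN hj hk hjk
    have hne2 : γ (n,k) - γ (n,j) ≠ 0 := gne0 N hb γ hγ hn1 hnN hk hj hkj
    have hne3 : γ (n,j) - (γ (n,k) + -(Complex.I*hb)) ≠ 0 := by
      intro H
      exact gne N hb γ hγ hn1 hnN hj hk hjk (-1) (by push_cast; linear_combination H)
    have hne4 : γ (n,k) - (γ (n,j) + -(Complex.I*hb)) ≠ 0 := by
      intro H
      exact gne N hb γ hγ hn1 hnN hk hj hkj (-1) (by push_cast; linear_combination H)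
    have hDJ : (∏ s ∈ ((Finset.Icc 1 n).erase j).erase k, (γ (n,j) - γ (n,s))) ≠ 0 := by
      rw [Finset.prod_ne_zero_iff]
      intro s hs
      exact gne0 N hb γ hγ hn1 hnN hj
        (Finset.mem_of_mem_erase (Finset.mem_of_mem_erase hs))
        (Ne.symm (Finset.ne_of_mem_erase (Finset.mem_of_mem_erase hs)))
    have hDK : (∏ s ∈ ((Finset.Icc 1 n).erase k).erase j, (γ (n,k) - γ (n,s))) ≠ 0 := by
      rw [Finset.prod_ne_zero_iff]
      intro s hs
      exact gne0 N hb γ hγ hn1 hnN hk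
        (Finset.mem_of_mem_erase (Finset.mem_of_mem_erase hs))
        (Ne.symm (Finset.ne_of_mem_erase (Finset.mem_of_mem_erase hs)))
    have o1 := genA hb n j k l 0 0 γ hjk hk hl
    have o2 := genA hb n k j l 0 (-(Complex.I*hb)) γ hkj hj hl
    have o3 := genA hb n k j l (-(Complex.I*hb)) (-(Complex.I*hb)) γ hkj hj hl
    have o4 := genA hb n j k l (-(Complex.I*hb)) 0 γ hjk hk hl
    have o5 := genA hb n k j l 0 0 γ hkj hj hl
    have o6 := genA hb n j k l 0 (-(Complex.I*hb)) γ hjk hk hl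
    have o7 := genA hb n j k l (-(Complex.I*hb)) (-(Complex.I*hb)) γ hjk hk hl
    have o8 := genA hb n k j l (-(Complex.I*hb)) 0 γ hkj hj hl
    simp only [shift_zero, add_zero] at o1 o2 o3 o4 o5 o6 o7 o8
    rw [hinv1, hinv2, hinv3, hinv4, o1, o2, o3, o4, o5, o6, o7, o8]
    set x := γ (n,j) with hx
    set y := γ (n,k) with hy
    set g := γ (n+1,l) with hg
    set V := rc hb (n+1) l γ with hV
    set PJ := ∏ r ∈ (Finset.Icc 1 (n+1)).erase l, (x - γ (n+1,r) - Complex.I*hb/2) with hPJ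
    set PK := ∏ r ∈ (Finset.Icc 1 (n+1)).erase l, (y - γ (n+1,r) - Complex.I*hb/2) with hPK
    set DJ := ∏ s ∈ ((Finset.Icc 1 n).erase j).erase k, (x - γ (n,s)) with hDJ2
    set DK := ∏ s ∈ ((Finset.Icc 1 n).erase k).erase j, (y - γ (n,s)) with hDK2
    clear_value x y g V PJ PK DJ DK
    clear o1 o2 o3 o4 o5 o6 o7 o8 hinv1 hinv2 hinv3 hinv4 hx hy hg hV hPJ hPK hDJ2 hDK2 hγ
    field_simp
    ring

set_option maxHeartbeats 1600000 in
lemma hkey2 (N n : ℕ) (hb : ℂ) (hhb : hb ≠ 0) (γ : Pt) (hγ : Generic N hb γ)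
    (hn1 : 1 ≤ n) (hn2 : n + 2 ≤ N) :
    ∀ j ∈ Finset.Icc 1 (n+1), ∀ k ∈ Finset.Icc 1 (n+1), ∀ l ∈ Finset.Icc 1 n,
      (rc hb (n+1) j γ * rc hb (n+1) k (shift (n+1) j (-(Complex.I*hb)) γ)
          * rc hb n l (shift (n+1) k (-(Complex.I*hb)) (shift (n+1) j (-(Complex.I*hb)) γ))
        - 2 * (rc hb (n+1) j γ * rc hb n l (shift (n+1) j (-(Complex.I*hb)) γ)
          * rc hb (n+1) k (shift (n+1) j (-(Complex.I*hb)) (shift n l (-(Complex.I*hb)) γ)))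
        + rc hb n l γ * rc hb (n+1) j (shift n l (-(Complex.I*hb)) γ)
          * rc hb (n+1) k (shift (n+1) j (-(Complex.I*hb)) (shift n l (-(Complex.I*hb)) γ)))
      + (rc hb (n+1) k γ * rc hb (n+1) j (shift (n+1) k (-(Complex.I*hb)) γ)
          * rc hb n l (shift (n+1) j (-(Complex.I*hb)) (shift (n+1) k (-(Complex.I*hb)) γ))
        - 2 * (rc hb (n+1) k γ * rc hb n l (shift (n+1) k (-(Complex.I*hb)) γ)
          * rc hb (n+1) j (shift (n+1) k (-(Complex.I*hb)) (shift n l (-(Complex.I*hb)) γ)))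
        + rc hb n l γ * rc hb (n+1) k (shift n l (-(Complex.I*hb)) γ)
          * rc hb (n+1) j (shift (n+1) k (-(Complex.I*hb)) (shift n l (-(Complex.I*hb)) γ))) = 0 := by
  intro j hj k hk l hl
  have hnN : n + 1 ≤ N := by omega
  -- strip the level-n shifts off the level-(n+1) coefficients
  have hc1 : shift (n+1) j (-(Complex.I*hb)) (shift n l (-(Complex.I*hb)) γ)
      = shift n l (-(Complex.I*hb)) (shift (n+1) j (-(Complex.I*hb)) γ) :=
    shift_comm _ _ _ _ _ _ _
  have hc2 : shift (n+1) k (-(Complex.I*hb)) (shift n l (-(Complex.I*hb)) γ)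
      = shift n l (-(Complex.I*hb)) (shift (n+1) k (-(Complex.I*hb)) γ) :=
    shift_comm _ _ _ _ _ _ _
  rw [hc1, hc2]
  have hinv1 : ∀ a, rc hb (n+1) a (shift n l (-(Complex.I*hb))
      (shift (n+1) j (-(Complex.I*hb)) γ)) = rc hb (n+1) a (shift (n+1) j (-(Complex.I*hb)) γ) :=
    fun a => rc_invariant hb (n+1) a n l _ _ (by omega) (by omega)
  have hinv2 : ∀ a, rc hb (n+1) a (shift n l (-(Complex.I*hb))
      (shift (n+1) k (-(Complex.I*hb)) γ)) = rc hb (n+1) a (shift (n+1) k (-(Complex.I*hb)) γ) :=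
    fun a => rc_invariant hb (n+1) a n l _ _ (by omega) (by omega)
  have hinv3 : ∀ a, rc hb (n+1) a (shift n l (-(Complex.I*hb)) γ) = rc hb (n+1) a γ :=
    fun a => rc_invariant hb (n+1) a n l _ _ (by omega) (by omega)
  simp only [hinv1, hinv2, hinv3]
  by_cases hjk : j = k
  · -- diagonal case
    subst hjk
    have hDjf : (∏ s ∈ (Finset.Icc 1 (n+1)).erase j, (γ (n+1,j) - γ (n+1,s))) ≠ 0 := by
      rw [Finset.prod_ne_zero_iff]
      intro s hs
      exact gne0 N hb γ hγ (by omega) hnN hj (Finset.mem_of_mem_erase hs)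
        (Ne.symm (Finset.ne_of_mem_erase hs))
    have hDjf' : (∏ s ∈ (Finset.Icc 1 (n+1)).erase j,
        ((γ (n+1,j) + -(Complex.I*hb)) - γ (n+1,s))) ≠ 0 := by
      rw [Finset.prod_ne_zero_iff]
      intro s hs H
      exact gne N hb γ hγ (by omega) hnN hj (Finset.mem_of_mem_erase hs)
        (Ne.symm (Finset.ne_of_mem_erase hs)) 1 (by push_cast; linear_combination H)
    have hDv : (∏ s ∈ (Finset.Icc 1 n).erase l, (γ (n,l) - γ (n,s))) ≠ 0 := by
      rw [Finset.prod_ne_zero_iff]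
      intro s hs
      exact gne0 N hb γ hγ hn1 (by omega) hl (Finset.mem_of_mem_erase hs)
        (Ne.symm (Finset.ne_of_mem_erase hs))
    have o1 := genF hb (n+1) j 0 γ
    have o2 := genF hb (n+1) j (-(Complex.I*hb)) γ
    have o3 := genD hb n l j 0 0 γ hj
    have o4 := genD hb n l j (-(Complex.I*hb)) 0 γ hj
    have o5 := genD hb n l j (-(Complex.I*hb)) (-(Complex.I*hb)) γ hj
    simp only [shift_zero, add_zero] at o1 o2 o3 o4 o5
    rw [o1, o2, o3, o4, o5]
    set gj := γ (n+1,j) with hgj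
    set z := γ (n,l) with hz
    set Pj := ∏ r ∈ Finset.Icc 1 (n+1+1), (gj - γ (n+1+1,r) - Complex.I*hb/2) with hPj
    set Pj' := ∏ r ∈ Finset.Icc 1 (n+1+1),
      (gj + -(Complex.I*hb) - γ (n+1+1,r) - Complex.I*hb/2) with hPj'
    set Q := ∏ r ∈ (Finset.Icc 1 (n+1)).erase j, (z - γ (n+1,r) - Complex.I*hb/2) with hQ
    set Dj := ∏ s ∈ (Finset.Icc 1 (n+1)).erase j, (gj - γ (n+1,s)) with hDj2
    set Dj' := ∏ s ∈ (Finset.Icc 1 (n+1)).erase j, (gj + -(Complex.I*hb) - γ (n+1,s)) with hDj2'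
    set Dv := ∏ s ∈ (Finset.Icc 1 n).erase l, (z - γ (n,s)) with hDv2
    clear_value gj z Pj Pj' Q Dj Dj' Dv
    clear o1 o2 o3 o4 o5 hinv1 hinv2 hinv3 hc1 hc2 hγ
    ring
  · -- off-diagonal case
    have hkj : k ≠ j := Ne.symm hjk
    have hne1 : γ (n+1,j) - γ (n+1,k) ≠ 0 := gne0 N hb γ hγ (by omega) hnN hj hk hjk
    have hne2 : γ (n+1,k) - γ (n+1,j) ≠ 0 := gne0 N hb γ hγ (by omega) hnN hk hj hkj
    have hne3 : γ (n+1,j) - (γ (n+1,k) + -(Complex.I*hb)) ≠ 0 := by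
      intro H
      exact gne N hb γ hγ (by omega) hnN hj hk hjk (-1) (by push_cast; linear_combination H)
    have hne4 : γ (n+1,k) - (γ (n+1,j) + -(Complex.I*hb)) ≠ 0 := by
      intro H
      exact gne N hb γ hγ (by omega) hnN hk hj hkj (-1) (by push_cast; linear_combination H)
    have hDj : (∏ s ∈ ((Finset.Icc 1 (n+1)).erase j).erase k, (γ (n+1,j) - γ (n+1,s))) ≠ 0 := by
      rw [Finset.prod_ne_zero_iff]
      intro s hs
      exact gne0 N hb γ hγ (by omega) hnN hj
        (Finset.mem_of_mem_erase (Finset.mem_of_mem_erase hs))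
        (Ne.symm (Finset.ne_of_mem_erase (Finset.mem_of_mem_erase hs)))
    have hDk : (∏ s ∈ ((Finset.Icc 1 (n+1)).erase k).erase j, (γ (n+1,k) - γ (n+1,s))) ≠ 0 := by
      rw [Finset.prod_ne_zero_iff]
      intro s hs
      exact gne0 N hb γ hγ (by omega) hnN hk
        (Finset.mem_of_mem_erase (Finset.mem_of_mem_erase hs))
        (Ne.symm (Finset.ne_of_mem_erase (Finset.mem_of_mem_erase hs)))
    have hDv : (∏ s ∈ (Finset.Icc 1 n).erase l, (γ (n,l) - γ (n,s))) ≠ 0 := by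
      rw [Finset.prod_ne_zero_iff]
      intro s hs
      exact gne0 N hb γ hγ hn1 (by omega) hl (Finset.mem_of_mem_erase hs)
        (Ne.symm (Finset.ne_of_mem_erase hs))
    -- reorder the double level-(n+1) shift in the (j,k) term
    have hc3 : shift (n+1) k (-(Complex.I*hb)) (shift (n+1) j (-(Complex.I*hb)) γ)
        = shift (n+1) j (-(Complex.I*hb)) (shift (n+1) k (-(Complex.I*hb)) γ) :=
      shift_comm _ _ _ _ _ _ _
    rw [hc3]
    have o1 := genE hb (n+1) j k 0 γ hjk hk
    have o2 := genE hb (n+1) k j (-(Complex.I*hb)) γ hkj hj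
    have o3 := genE hb (n+1) j k (-(Complex.I*hb)) γ hjk hk
    have o4 := genE hb (n+1) k j 0 γ hkj hj
    have o5 := genC hb n l j k 0 0 γ hjk hj hk
    have o6 := genC hb n l j k (-(Complex.I*hb)) 0 γ hjk hj hk
    have o7 := genC hb n l j k 0 (-(Complex.I*hb)) γ hjk hj hk
    have o8 := genC hb n l j k (-(Complex.I*hb)) (-(Complex.I*hb)) γ hjk hj hk
    simp only [shift_zero, add_zero] at o1 o2 o3 o4 o5 o6 o7 o8
    rw [o1, o2, o3, o4, o5, o6, o7, o8]
    set gj := γ (n+1,j) with hgj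
    set gk := γ (n+1,k) with hgk
    set z := γ (n,l) with hz
    set Pj := ∏ r ∈ Finset.Icc 1 (n+1+1), (gj - γ (n+1+1,r) - Complex.I*hb/2) with hPj
    set Pk := ∏ r ∈ Finset.Icc 1 (n+1+1), (gk - γ (n+1+1,r) - Complex.I*hb/2) with hPk
    set Q := ∏ r ∈ ((Finset.Icc 1 (n+1)).erase j).erase k,
      (z - γ (n+1,r) - Complex.I*hb/2) with hQ
    set Dj := ∏ s ∈ ((Finset.Icc 1 (n+1)).erase j).erase k, (gj - γ (n+1,s)) with hDj2
    set Dk := ∏ s ∈ ((Finset.Icc 1 (n+1)).erase k).erase j, (gk - γ (n+1,s)) with hDk2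
    set Dv := ∏ s ∈ (Finset.Icc 1 n).erase l, (z - γ (n,s)) with hDv2
    clear_value gj gk z Pj Pk Q Dj Dk Dv
    clear o1 o2 o3 o4 o5 o6 o7 o8 hinv1 hinv2 hinv3 hc1 hc2 hc3 hγ
    have hB1 : (z - (gj + -(Complex.I*hb)) - Complex.I*hb/2)
          * ((z - (gk + -(Complex.I*hb)) - Complex.I*hb/2) * Q) / Dv
        - 2 * ((z - (gj + -(Complex.I*hb)) - Complex.I*hb/2) * ((z - gk - Complex.I*hb/2) * Q) / Dv)
        + (z - gj - Complex.I*hb/2) * ((z - gk - Complex.I*hb/2) * Q) / Dv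
        = (Complex.I*hb * (gk - gj + Complex.I*hb)) * Q / Dv := by ring
    have hB2 : (z - (gj + -(Complex.I*hb)) - Complex.I*hb/2)
          * ((z - (gk + -(Complex.I*hb)) - Complex.I*hb/2) * Q) / Dv
        - 2 * ((z - (gk + -(Complex.I*hb)) - Complex.I*hb/2) * ((z - gj - Complex.I*hb/2) * Q) / Dv)
        + (z - gj - Complex.I*hb/2) * ((z - gk - Complex.I*hb/2) * Q) / Dv
        = (Complex.I*hb * (gj - gk + Complex.I*hb)) * Q / Dv := by ring
    have hC : (Pj / ((gj - gk) * Dj)) * (Pk / ((gk - (gj + -(Complex.I*hb))) * Dk))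
          * ((Complex.I*hb * (gk - gj + Complex.I*hb)) * Q / Dv)
        + (Pk / ((gk - gj) * Dk)) * (Pj / ((gj - (gk + -(Complex.I*hb))) * Dj))
          * ((Complex.I*hb * (gj - gk + Complex.I*hb)) * Q / Dv) = 0 := by
      field_simp
      ring
    linear_combination hC + (Pj / ((gj - gk) * Dj)) * (Pk / ((gk - (gj + -(Complex.I*hb))) * Dk)) * hB1
      + (Pk / ((gk - gj) * Dk)) * (Pj / ((gj - (gk + -(Complex.I*hb))) * Dj)) * hB2

set_option maxHeartbeats 1600000 in
lemma hkey3 (N n : ℕ) (hb : ℂ) (hhb : hb ≠ 0) (γ : Pt) (hγ : Generic N hb γ)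
    (hn1 : 1 ≤ n) (hn2 : n + 2 ≤ N) :
    ∀ j ∈ Finset.Icc 1 n, ∀ k ∈ Finset.Icc 1 n, ∀ l ∈ Finset.Icc 1 (n+1),
      (lc hb n j γ * lc hb n k (shift n j (Complex.I*hb) γ)
          * lc hb (n+1) l (shift n k (Complex.I*hb) (shift n j (Complex.I*hb) γ))
        - 2 * (lc hb n j γ * lc hb (n+1) l (shift n j (Complex.I*hb) γ)
          * lc hb n k (shift n j (Complex.I*hb) (shift (n+1) l (Complex.I*hb) γ)))
        + lc hb (n+1) l γ * lc hb n j (shift (n+1) l (Complex.I*hb) γ)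
          * lc hb n k (shift n j (Complex.I*hb) (shift (n+1) l (Complex.I*hb) γ)))
      + (lc hb n k γ * lc hb n j (shift n k (Complex.I*hb) γ)
          * lc hb (n+1) l (shift n j (Complex.I*hb) (shift n k (Complex.I*hb) γ))
        - 2 * (lc hb n k γ * lc hb (n+1) l (shift n k (Complex.I*hb) γ)
          * lc hb n j (shift n k (Complex.I*hb) (shift (n+1) l (Complex.I*hb) γ)))
        + lc hb (n+1) l γ * lc hb n k (shift (n+1) l (Complex.I*hb) γ)
          * lc hb n j (shift n k (Complex.I*hb) (shift (n+1) l (Complex.I*hb) γ))) = 0 := by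
  intro j hj k hk l hl
  have hnN : n + 1 ≤ N := by omega
  have hc1 : shift n j (Complex.I*hb) (shift (n+1) l (Complex.I*hb) γ)
      = shift (n+1) l (Complex.I*hb) (shift n j (Complex.I*hb) γ) := shift_comm _ _ _ _ _ _ _
  have hc2 : shift n k (Complex.I*hb) (shift (n+1) l (Complex.I*hb) γ)
      = shift (n+1) l (Complex.I*hb) (shift n k (Complex.I*hb) γ) := shift_comm _ _ _ _ _ _ _
  rw [hc1, hc2]
  have hinv1 : ∀ a δ, lc hb n a (shift (n+1) l (Complex.I*hb) δ) = lc hb n a δ :=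
    fun a δ => lc_invariant hb n a (n+1) l _ δ (by omega) (by omega)
  simp only [hinv1]
  by_cases hjk : j = k
  · -- diagonal case
    subst hjk
    have o1 := genH hb n j 0 γ hn1
    have o2 := genH hb n j (Complex.I*hb) γ hn1
    have o3 := genD' hb n l j 0 0 γ hj
    have o4 := genD' hb n l j (Complex.I*hb) 0 γ hj
    have o5 := genD' hb n l j (Complex.I*hb) (Complex.I*hb) γ hj
    simp only [shift_zero, add_zero] at o1 o2 o3 o4 o5
    rw [o1, o2, o3, o4, o5]
    ring
  · -- off-diagonal case
    have hkj : k ≠ j := Ne.symm hjk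
    have hne1 : γ (n,j) - γ (n,k) ≠ 0 := gne0 N hb γ hγ hn1 (by omega) hj hk hjk
    have hne2 : γ (n,k) - γ (n,j) ≠ 0 := gne0 N hb γ hγ hn1 (by omega) hk hj hkj
    have hne3 : γ (n,j) - (γ (n,k) + Complex.I*hb) ≠ 0 := by
      intro H
      exact gne N hb γ hγ hn1 (by omega) hj hk hjk 1 (by push_cast; linear_combination H)
    have hne4 : γ (n,k) - (γ (n,j) + Complex.I*hb) ≠ 0 := by
      intro H
      exact gne N hb γ hγ hn1 (by omega) hk hj hkj 1 (by push_cast; linear_combination H)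
    have hDj : (∏ s ∈ ((Finset.Icc 1 n).erase j).erase k, (γ (n,j) - γ (n,s))) ≠ 0 := by
      rw [Finset.prod_ne_zero_iff]
      intro s hs
      exact gne0 N hb γ hγ hn1 (by omega) hj
        (Finset.mem_of_mem_erase (Finset.mem_of_mem_erase hs))
        (Ne.symm (Finset.ne_of_mem_erase (Finset.mem_of_mem_erase hs)))
    have hDk : (∏ s ∈ ((Finset.Icc 1 n).erase k).erase j, (γ (n,k) - γ (n,s))) ≠ 0 := by
      rw [Finset.prod_ne_zero_iff]
      intro s hs
      exact gne0 N hb γ hγ hn1 (by omega) hk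
        (Finset.mem_of_mem_erase (Finset.mem_of_mem_erase hs))
        (Ne.symm (Finset.ne_of_mem_erase (Finset.mem_of_mem_erase hs)))
    have hDv : (∏ s ∈ (Finset.Icc 1 (n+1)).erase l, (γ (n+1,l) - γ (n+1,s))) ≠ 0 := by
      rw [Finset.prod_ne_zero_iff]
      intro s hs
      exact gne0 N hb γ hγ (by omega) hnN hl (Finset.mem_of_mem_erase hs)
        (Ne.symm (Finset.ne_of_mem_erase hs))
    have hc3 : shift n k (Complex.I*hb) (shift n j (Complex.I*hb) γ)
        = shift n j (Complex.I*hb) (shift n k (Complex.I*hb) γ) := shift_comm _ _ _ _ _ _ _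
    rw [hc3]
    have o1 := genG hb n j k 0 γ hn1 hjk hk
    have o2 := genG hb n k j (Complex.I*hb) γ hn1 hkj hj
    have o3 := genG hb n j k (Complex.I*hb) γ hn1 hjk hk
    have o4 := genG hb n k j 0 γ hn1 hkj hj
    have o5 := genC' hb n l j k 0 0 γ hjk hj hk
    have o6 := genC' hb n l j k (Complex.I*hb) 0 γ hjk hj hk
    have o7 := genC' hb n l j k 0 (Complex.I*hb) γ hjk hj hk
    have o8 := genC' hb n l j k (Complex.I*hb) (Complex.I*hb) γ hjk hj hk
    simp only [shift_zero, add_zero] at o1 o2 o3 o4 o5 o6 o7 o8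
    rw [o1, o2, o3, o4, o5, o6, o7, o8]
    set x := γ (n,j) with hx
    set y := γ (n,k) with hy
    set z := γ (n+1,l) with hz
    set Pj := ∏ r ∈ Finset.Icc 1 (n-1), (x - γ (n-1,r) + Complex.I*hb/2) with hPj
    set Pk := ∏ r ∈ Finset.Icc 1 (n-1), (y - γ (n-1,r) + Complex.I*hb/2) with hPk
    set Q := ∏ r ∈ ((Finset.Icc 1 n).erase j).erase k, (z - γ (n,r) + Complex.I*hb/2) with hQ
    set Dj := ∏ s ∈ ((Finset.Icc 1 n).erase j).erase k, (x - γ (n,s)) with hDj2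
    set Dk := ∏ s ∈ ((Finset.Icc 1 n).erase k).erase j, (y - γ (n,s)) with hDk2
    set Dv := ∏ s ∈ (Finset.Icc 1 (n+1)).erase l, (z - γ (n+1,s)) with hDv2
    clear_value x y z Pj Pk Q Dj Dk Dv
    clear o1 o2 o3 o4 o5 o6 o7 o8 hinv1 hc1 hc2 hc3 hγ
    have hB1 : (z - (x + Complex.I*hb) + Complex.I*hb/2)
          * ((z - (y + Complex.I*hb) + Complex.I*hb/2) * Q) / Dv
        - 2 * ((z - (x + Complex.I*hb) + Complex.I*hb/2) * ((z - y + Complex.I*hb/2) * Q) / Dv)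
        + (z - x + Complex.I*hb/2) * ((z - y + Complex.I*hb/2) * Q) / Dv
        = (Complex.I*hb * (x - y + Complex.I*hb)) * Q / Dv := by ring
    have hB2 : (z - (x + Complex.I*hb) + Complex.I*hb/2)
          * ((z - (y + Complex.I*hb) + Complex.I*hb/2) * Q) / Dv
        - 2 * ((z - (y + Complex.I*hb) + Complex.I*hb/2) * ((z - x + Complex.I*hb/2) * Q) / Dv)
        + (z - x + Complex.I*hb/2) * ((z - y + Complex.I*hb/2) * Q) / Dv
        = (Complex.I*hb * (y - x + Complex.I*hb)) * Q / Dv := by ring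
    have hC : (Pj / ((x - y) * Dj)) * (Pk / ((y - (x + Complex.I*hb)) * Dk))
          * ((Complex.I*hb * (x - y + Complex.I*hb)) * Q / Dv)
        + (Pk / ((y - x) * Dk)) * (Pj / ((x - (y + Complex.I*hb)) * Dj))
          * ((Complex.I*hb * (y - x + Complex.I*hb)) * Q / Dv) = 0 := by
      field_simp
      ring
    linear_combination hC
      + (Pj / ((x - y) * Dj)) * (Pk / ((y - (x + Complex.I*hb)) * Dk)) * hB1
      + (Pk / ((y - x) * Dk)) * (Pj / ((x - (y + Complex.I*hb)) * Dj)) * hB2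

set_option maxHeartbeats 1600000 in
lemma hkey4 (N n : ℕ) (hb : ℂ) (hhb : hb ≠ 0) (γ : Pt) (hγ : Generic N hb γ)
    (hn1 : 1 ≤ n) (hn2 : n + 2 ≤ N) :
    ∀ j ∈ Finset.Icc 1 (n+1), ∀ k ∈ Finset.Icc 1 (n+1), ∀ l ∈ Finset.Icc 1 n,
      (lc hb (n+1) j γ * lc hb (n+1) k (shift (n+1) j (Complex.I*hb) γ)
          * lc hb n l (shift (n+1) k (Complex.I*hb) (shift (n+1) j (Complex.I*hb) γ))
        - 2 * (lc hb (n+1) j γ * lc hb n l (shift (n+1) j (Complex.I*hb) γ)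
          * lc hb (n+1) k (shift (n+1) j (Complex.I*hb) (shift n l (Complex.I*hb) γ)))
        + lc hb n l γ * lc hb (n+1) j (shift n l (Complex.I*hb) γ)
          * lc hb (n+1) k (shift (n+1) j (Complex.I*hb) (shift n l (Complex.I*hb) γ)))
      + (lc hb (n+1) k γ * lc hb (n+1) j (shift (n+1) k (Complex.I*hb) γ)
          * lc hb n l (shift (n+1) j (Complex.I*hb) (shift (n+1) k (Complex.I*hb) γ))
        - 2 * (lc hb (n+1) k γ * lc hb n l (shift (n+1) k (Complex.I*hb) γ)
          * lc hb (n+1) j (shift (n+1) k (Complex.I*hb) (shift n l (Complex.I*hb) γ)))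
        + lc hb n l γ * lc hb (n+1) k (shift n l (Complex.I*hb) γ)
          * lc hb (n+1) j (shift (n+1) k (Complex.I*hb) (shift n l (Complex.I*hb) γ))) = 0 := by
  intro j hj k hk l hl
  have hnN : n + 1 ≤ N := by omega
  have hinv1 : ∀ a δ, lc hb n a (shift (n+1) j (Complex.I*hb) δ) = lc hb n a δ :=
    fun a δ => lc_invariant hb n a (n+1) j _ δ (by omega) (by omega)
  have hinv2 : ∀ a δ, lc hb n a (shift (n+1) k (Complex.I*hb) δ) = lc hb n a δ :=
    fun a δ => lc_invariant hb n a (n+1) k _ δ (by omega) (by omega)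
  simp only [hinv1, hinv2]
  by_cases hjk : j = k
  · -- diagonal case
    subst hjk
    have hDjf : (∏ s ∈ (Finset.Icc 1 (n+1)).erase j, (γ (n+1,j) - γ (n+1,s))) ≠ 0 := by
      rw [Finset.prod_ne_zero_iff]
      intro s hs
      exact gne0 N hb γ hγ (by omega) hnN hj (Finset.mem_of_mem_erase hs)
        (Ne.symm (Finset.ne_of_mem_erase hs))
    have hDjf' : (∏ s ∈ (Finset.Icc 1 (n+1)).erase j,
        ((γ (n+1,j) + Complex.I*hb) - γ (n+1,s))) ≠ 0 := by
      rw [Finset.prod_ne_zero_iff]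
      intro s hs H
      exact gne N hb γ hγ (by omega) hnN hj (Finset.mem_of_mem_erase hs)
        (Ne.symm (Finset.ne_of_mem_erase hs)) (-1) (by push_cast; linear_combination H)
    have o1 := genB' hb n j l 0 0 γ hl
    have o2 := genB' hb n j l 0 (Complex.I*hb) γ hl
    have o3 := genB' hb n j l (Complex.I*hb) (Complex.I*hb) γ hl
    have o4 := genB' hb n j l (Complex.I*hb) 0 γ hl
    simp only [shift_zero, add_zero] at o1 o2 o3 o4
    rw [o1, o2, o3, o4]
    set gj := γ (n+1,j) with hgj
    set z := γ (n,l) with hz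
    set V := lc hb n l γ with hV
    set Pj := ∏ r ∈ (Finset.Icc 1 n).erase l, (gj - γ (n,r) + Complex.I*hb/2) with hPj
    set Pj' := ∏ r ∈ (Finset.Icc 1 n).erase l,
      (gj + Complex.I*hb - γ (n,r) + Complex.I*hb/2) with hPj'
    set Dj := ∏ s ∈ (Finset.Icc 1 (n+1)).erase j, (gj - γ (n+1,s)) with hDj2
    set Dj' := ∏ s ∈ (Finset.Icc 1 (n+1)).erase j, (gj + Complex.I*hb - γ (n+1,s)) with hDj2'
    clear_value gj z V Pj Pj' Dj Dj'
    clear o1 o2 o3 o4 hinv1 hinv2 hγ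
    field_simp
    ring
  · -- off-diagonal case
    have hkj : k ≠ j := Ne.symm hjk
    have hne1 : γ (n+1,j) - γ (n+1,k) ≠ 0 := gne0 N hb γ hγ (by omega) hnN hj hk hjk
    have hne2 : γ (n+1,k) - γ (n+1,j) ≠ 0 := gne0 N hb γ hγ (by omega) hnN hk hj hkj
    have hne3 : γ (n+1,j) - (γ (n+1,k) + Complex.I*hb) ≠ 0 := by
      intro H
      exact gne N hb γ hγ (by omega) hnN hj hk hjk 1 (by push_cast; linear_combination H)
    have hne4 : γ (n+1,k) - (γ (n+1,j) + Complex.I*hb) ≠ 0 := by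
      intro H
      exact gne N hb γ hγ (by omega) hnN hk hj hkj 1 (by push_cast; linear_combination H)
    have hDj : (∏ s ∈ ((Finset.Icc 1 (n+1)).erase j).erase k, (γ (n+1,j) - γ (n+1,s))) ≠ 0 := by
      rw [Finset.prod_ne_zero_iff]
      intro s hs
      exact gne0 N hb γ hγ (by omega) hnN hj
        (Finset.mem_of_mem_erase (Finset.mem_of_mem_erase hs))
        (Ne.symm (Finset.ne_of_mem_erase (Finset.mem_of_mem_erase hs)))
    have hDk : (∏ s ∈ ((Finset.Icc 1 (n+1)).erase k).erase j, (γ (n+1,k) - γ (n+1,s))) ≠ 0 := by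
      rw [Finset.prod_ne_zero_iff]
      intro s hs
      exact gne0 N hb γ hγ (by omega) hnN hk
        (Finset.mem_of_mem_erase (Finset.mem_of_mem_erase hs))
        (Ne.symm (Finset.ne_of_mem_erase (Finset.mem_of_mem_erase hs)))
    have o1 := genA' hb n j k l 0 0 γ hjk hk hl
    have o2 := genA' hb n k j l 0 (Complex.I*hb) γ hkj hj hl
    have o3 := genA' hb n k j l (Complex.I*hb) (Complex.I*hb) γ hkj hj hl
    have o4 := genA' hb n j k l (Complex.I*hb) 0 γ hjk hk hl
    have o5 := genA' hb n k j l 0 0 γ hkj hj hl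
    have o6 := genA' hb n j k l 0 (Complex.I*hb) γ hjk hk hl
    have o7 := genA' hb n j k l (Complex.I*hb) (Complex.I*hb) γ hjk hk hl
    have o8 := genA' hb n k j l (Complex.I*hb) 0 γ hkj hj hl
    simp only [shift_zero, add_zero] at o1 o2 o3 o4 o5 o6 o7 o8
    rw [o1, o2, o3, o4, o5, o6, o7, o8]
    set gj := γ (n+1,j) with hgj
    set gk := γ (n+1,k) with hgk
    set z := γ (n,l) with hz
    set V := lc hb n l γ with hV
    set Pj := ∏ r ∈ (Finset.Icc 1 n).erase l, (gj - γ (n,r) + Complex.I*hb/2) with hPj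
    set Pk := ∏ r ∈ (Finset.Icc 1 n).erase l, (gk - γ (n,r) + Complex.I*hb/2) with hPk
    set Dj := ∏ s ∈ ((Finset.Icc 1 (n+1)).erase j).erase k, (gj - γ (n+1,s)) with hDj2
    set Dk := ∏ s ∈ ((Finset.Icc 1 (n+1)).erase k).erase j, (gk - γ (n+1,s)) with hDk2
    clear_value gj gk z V Pj Pk Dj Dk
    clear o1 o2 o3 o4 o5 o6 o7 o8 hinv1 hinv2 hγ
    field_simp
    ring

/-- the Serre relations of `gl(N)` for the Gelfand–Zetlin operators,
together with the commutativity of distant simple-root generators, pointwise at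
generic points. -/
theorem gz_serre_relations (N : ℕ) (hN : 3 ≤ N) (hb : ℂ) (hhb : hb ≠ 0)
    (f : Pt → ℂ) (γ : Pt) (hγ : Generic N hb γ) :
    (∀ n, 1 ≤ n → n ≤ N - 2 →
      (Eraise hb n (Eraise hb n (Eraise hb (n + 1) f)) γ
          - 2 * Eraise hb n (Eraise hb (n + 1) (Eraise hb n f)) γ
          + Eraise hb (n + 1) (Eraise hb n (Eraise hb n f)) γ = 0 ∧
        Eraise hb (n + 1) (Eraise hb (n + 1) (Eraise hb n f)) γ
          - 2 * Eraise hb (n + 1) (Eraise hb n (Eraise hb (n + 1) f)) γ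
          + Eraise hb n (Eraise hb (n + 1) (Eraise hb (n + 1) f)) γ = 0 ∧
        Elower hb n (Elower hb n (Elower hb (n + 1) f)) γ
          - 2 * Elower hb n (Elower hb (n + 1) (Elower hb n f)) γ
          + Elower hb (n + 1) (Elower hb n (Elower hb n f)) γ = 0 ∧
        Elower hb (n + 1) (Elower hb (n + 1) (Elower hb n f)) γ
          - 2 * Elower hb (n + 1) (Elower hb n (Elower hb (n + 1) f)) γ
          + Elower hb n (Elower hb (n + 1) (Elower hb (n + 1) f)) γ = 0)) ∧
    (∀ n m, 1 ≤ n → n ≤ N - 1 → 1 ≤ m → m ≤ N - 1 → (n + 2 ≤ m ∨ m + 2 ≤ n) →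
      Eraise hb n (Eraise hb m f) γ = Eraise hb m (Eraise hb n f) γ ∧
      Elower hb n (Elower hb m f) γ = Elower hb m (Elower hb n f) γ) := by
  constructor
  · intro n hn1 hn2
    have hn2' : n + 2 ≤ N := by omega
    refine ⟨?_, ?_, ?_, ?_⟩
    · rw [Eraise_eq hb n, Eraise_eq hb (n+1)]
      exact serre_master _ _ _ _ _ _ _ _ f γ
        (fun a b δ => shift_comm _ _ _ _ _ _ δ) (fun a b δ => shift_comm _ _ _ _ _ _ δ)
        (hkey1 N n hb hhb γ hγ hn1 hn2')
    · rw [Eraise_eq hb n, Eraise_eq hb (n+1)]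
      exact serre_master _ _ _ _ _ _ _ _ f γ
        (fun a b δ => shift_comm _ _ _ _ _ _ δ) (fun a b δ => shift_comm _ _ _ _ _ _ δ)
        (hkey2 N n hb hhb γ hγ hn1 hn2')
    · rw [Elower_eq hb n, Elower_eq hb (n+1)]
      exact serre_master _ _ _ _ _ _ _ _ f γ
        (fun a b δ => shift_comm _ _ _ _ _ _ δ) (fun a b δ => shift_comm _ _ _ _ _ _ δ)
        (hkey3 N n hb hhb γ hγ hn1 hn2')
    · rw [Elower_eq hb n, Elower_eq hb (n+1)]
      exact serre_master _ _ _ _ _ _ _ _ f γ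
        (fun a b δ => shift_comm _ _ _ _ _ _ δ) (fun a b δ => shift_comm _ _ _ _ _ _ δ)
        (hkey4 N n hb hhb γ hγ hn1 hn2')
  · intro n m hn1 hn2 hm1 hm2 hdist
    constructor
    · rw [Eraise_eq hb n, Eraise_eq hb m]
      exact comm_master _ _ _ _ _ _ _ _ f γ
        (fun a b δ => shift_comm _ _ _ _ _ _ δ)
        (fun j _ l _ => rc_invariant hb n j m l _ γ (by omega) (by omega))
        (fun l _ j _ => rc_invariant hb m l n j _ γ (by omega) (by omega))
    · rw [Elower_eq hb n, Elower_eq hb m]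
      exact comm_master _ _ _ _ _ _ _ _ f γ
        (fun a b δ => shift_comm _ _ _ _ _ _ δ)
        (fun j _ l _ => lc_invariant hb n j m l _ γ (by omega) (by omega))
        (fun l _ j _ => lc_invariant hb m l n j _ γ (by omega) (by omega))
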